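/- Let α > 1/2, σ² > 0, θ_j = j^{−α} for j ≥ 1, and p_n = n with candidate sizes 1, …, n. Then: (i) m_n* · (σ²/n)^{1/(2α)} → 1 as n → ∞, i.e. m_n* ∼ (n/σ²)^{1/(2α)}; and (ii) min_{w ∈ W_n} R_n(w) ≍ n^{−1+1/(2α)} and R_n(m_n*) ≍ n^{−1+1/(2α)}. -/
import Mathlib


/-- Cumulative weight `γ j = ∑_{m=j}^{M} w m`. -/
noncomputable def cumw (M : ℕ) (w : ℕ → ℝ) (j : ℕ) : ℝ := ∑ m ∈ Finset.Icc j M, w m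

/-- Nested model-averaging risk with candidate sizes `k_m = m`, `m = 1, …, M`:
`R_n(w) = ∑_{j=1}^{M} [(1−γ_j)² θ_j² + σ² γ_j²/n] + ∑_{l=M+1}^{p} θ_l²`. -/
noncomputable def nestedRisk (n p M : ℕ) (σ2 : ℝ) (θ : ℕ → ℝ) (w : ℕ → ℝ) : ℝ :=
  (∑ j ∈ Finset.Icc 1 M, ((1 - cumw M w j) ^ 2 * θ j ^ 2 + σ2 * (cumw M w j) ^ 2 / n))
    + ∑ l ∈ Finset.Icc (M + 1) p, θ l ^ 2

/-- Risk of the single nested model of size `m`: `R_n(m) = m σ²/n + ∑_{l=m+1}^{p} θ_l²`. -/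
noncomputable def msRisk (n p : ℕ) (σ2 : ℝ) (θ : ℕ → ℝ) (m : ℕ) : ℝ :=
  (m : ℝ) * σ2 / n + ∑ l ∈ Finset.Icc (m + 1) p, θ l ^ 2

/-- `w` belongs to the simplex `W_M`. -/
def InSimplex (M : ℕ) (w : ℕ → ℝ) : Prop :=
  (∀ m ∈ Finset.Icc 1 M, 0 ≤ w m) ∧ ∑ m ∈ Finset.Icc 1 M, w m = 1

/-- `w` belongs to the discrete weight set `W_M(N)`:
each weight is a multiple of `1/N` in `[0,1]` and the weights sum to one. -/
def InSimplexN (M N : ℕ) (w : ℕ → ℝ) : Prop :=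
  InSimplex M w ∧ ∀ m ∈ Finset.Icc 1 M, ∃ t : ℕ, t ≤ N ∧ w m = (t : ℝ) / N

/-- Condition 1 (slowly decaying coefficients): there are `κ > 1`, `0 < δ ≤ ν < 1` with
`κν² < 1` such that `δ ≤ |θ ⌊κ l⌋ / θ l| ≤ ν` for all sufficiently large `l`. -/
def Condition1 (θ : ℕ → ℝ) : Prop :=
  ∃ κ δ ν : ℝ, 1 < κ ∧ 0 < δ ∧ δ ≤ ν ∧ ν < 1 ∧ κ * ν ^ 2 < 1 ∧
    ∀ᶠ l : ℕ in Filter.atTop,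
      δ ≤ |θ ⌊κ * (l : ℝ)⌋₊ / θ l| ∧ |θ ⌊κ * (l : ℝ)⌋₊ / θ l| ≤ ν

/-- Condition 2 (fast decaying coefficients): for every `κ > 1`,
`|θ ⌊κ l⌋ / θ l| → 0` as `l → ∞`. -/
def Condition2 (θ : ℕ → ℝ) : Prop :=
  ∀ κ : ℝ, 1 < κ →
    Filter.Tendsto (fun l : ℕ => |θ ⌊κ * (l : ℝ)⌋₊ / θ l|) Filter.atTop (nhds 0)

/-- `a ≍ b`: there are constants `0 < c ≤ C` with `c b_n ≤ a_n ≤ C b_n` eventually. -/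
def AsympEquiv (a b : ℕ → ℝ) : Prop :=
  ∃ c C : ℝ, 0 < c ∧ c ≤ C ∧ ∀ᶠ n in Filter.atTop, c * b n ≤ a n ∧ a n ≤ C * b n

/-- `a = o(b)`: `a_n / b_n → 0`. -/
def LittleO (a b : ℕ → ℝ) : Prop :=
  Filter.Tendsto (fun n => a n / b n) Filter.atTop (nhds 0)

open Filter


lemma aux_tail (β : ℝ) (hβ : 1 < β) (m n : ℕ) (hm : 1 ≤ m) :
    (∑ l ∈ Finset.Icc (m+1) n, ((l:ℝ))^(-β)) ≤ (m:ℝ)^(1-β)/(β-1) := by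
  have hm0 : (0:ℝ) < m := by exact_mod_cast hm
  rcases le_or_gt n m with h | h
  · rw [Finset.Icc_eq_empty (by omega)]
    simp only [Finset.sum_empty]
    exact div_nonneg (Real.rpow_nonneg hm0.le _) (by linarith)
  · have hmn : (m:ℝ) ≤ n := by exact_mod_cast h.le
    have heq : (∑ l ∈ Finset.Icc (m+1) n, ((l:ℝ))^(-β))
        = ∑ i ∈ Finset.Ico m n, (((i:ℕ) + 1 : ℕ) : ℝ)^(-β) := by
      rw [← Finset.Ico_add_one_right_eq_Icc]
      rw [Finset.sum_Ico_eq_sum_range, Finset.sum_Ico_eq_sum_range]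
      have : n + 1 - (m + 1) = n - m := by omega
      rw [this]
      exact Finset.sum_congr rfl (by intro i _; norm_num [Nat.add_right_comm])
    rw [heq]
    have hanti : AntitoneOn (fun x : ℝ => x ^ (-β)) (Set.Icc (m:ℝ) n) := by
      intro x hx y hy hxy
      exact Real.rpow_le_rpow_of_nonpos (lt_of_lt_of_le hm0 hx.1) hxy (by linarith)
    have hint := AntitoneOn.sum_le_integral_Ico h.le hanti
    refine hint.trans ?_
    rw [integral_rpow (Or.inr ⟨by linarith, by
      rw [Set.uIcc_of_le hmn]; intro hc; exact absurd (Set.mem_Icc.1 hc).1 (by linarith)⟩)]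
    have h1 : -β + 1 = 1 - β := by ring
    rw [h1]
    have hn1 : (0:ℝ) ≤ (n:ℝ) ^ (1-β) := Real.rpow_nonneg (by positivity) _
    have key : ((n:ℝ)^(1-β) - (m:ℝ)^(1-β))/(1-β) = ((m:ℝ)^(1-β) - (n:ℝ)^(1-β))/(β-1) := by
      rw [div_eq_div_iff (by linarith) (by linarith)]; ring
    rw [key]
    exact div_le_div_of_nonneg_right (by linarith) (by linarith) |>.trans_eq rfl

lemma aux_msRisk_succ (n m : ℕ) (σ2 : ℝ) (θ : ℕ → ℝ) (h2 : m + 1 ≤ n) :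
    msRisk n n σ2 θ (m+1) = msRisk n n σ2 θ m + (σ2/n - θ (m+1)^2) := by
  unfold msRisk
  have h3 : Finset.Icc (m+1) n = insert (m+1) (Finset.Icc (m+2) n) := by
    ext x; simp only [Finset.mem_Icc, Finset.mem_insert]; omega
  rw [h3, Finset.sum_insert (by simp)]
  push_cast
  ring

set_option maxHeartbeats 1000000

/-- Example 1 of the paper: polynomially decaying coefficients.
Let `θ_j = j^{−α}` with `α > 1/2`, `p_n = n`, candidate sizes `1, …, n`.  Then
(i) `m_n* ∼ (n/σ²)^{1/(2α)}`; and (ii) both the optimal nested MA risk and the optimal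
nested MS risk are `≍ n^{−1+1/(2α)}`. -/
theorem stmt_14 (α σ2 : ℝ) (hα : 1 / 2 < α) (hσ : 0 < σ2)
    (θ : ℕ → ℝ) (hθ : ∀ j, 1 ≤ j → θ j = (j : ℝ) ^ (-α))
    (mstar : ℕ → ℕ)
    (hmem : ∀ n, 1 ≤ n → mstar n ∈ Finset.Icc 1 n)
    (hmin : ∀ n, ∀ m ∈ Finset.Icc 1 n, msRisk n n σ2 θ (mstar n) ≤ msRisk n n σ2 θ m)
    (hleast : ∀ n, ∀ m ∈ Finset.Icc 1 n,
        msRisk n n σ2 θ m = msRisk n n σ2 θ (mstar n) → mstar n ≤ m)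
    (Rstar : ℕ → ℝ)
    (hRstar : ∀ n, Rstar n
        = sInf {r : ℝ | ∃ w, InSimplex n w ∧ r = nestedRisk n n n σ2 θ w}) :
    Filter.Tendsto (fun n => (mstar n : ℝ) / (((n : ℝ) / σ2) ^ (1 / (2 * α))))
        Filter.atTop (nhds 1)
    ∧ AsympEquiv Rstar (fun n => (n : ℝ) ^ ((-1 : ℝ) + 1 / (2 * α)))
    ∧ AsympEquiv (fun n => msRisk n n σ2 θ (mstar n))
        (fun n => (n : ℝ) ^ ((-1 : ℝ) + 1 / (2 * α))) := by
  classical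
  set q : ℝ := 1 / (2 * α) with hqdef
  set β : ℝ := 2 * α with hβdef
  have hβ1 : 1 < β := by rw [hβdef]; linarith
  have hβ0 : 0 < β := by linarith
  have hq0 : 0 < q := by rw [hqdef]; positivity
  have hq1 : q < 1 := by rw [hqdef, div_lt_one hβ0]; linarith
  have hqβ : q * β = 1 := by rw [hqdef, hβdef]; field_simp
  have hθ2 : ∀ j : ℕ, 1 ≤ j → θ j ^ 2 = (j:ℝ) ^ (-β) := by
    intro j hj
    have hj0 : (0:ℝ) < j := by exact_mod_cast hj
    rw [hθ j hj, ← Real.rpow_natCast ((j:ℝ)^(-α)) 2, ← Real.rpow_mul hj0.le]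
    congr 1
    push_cast
    rw [hβdef]; ring
  set M : ℕ → ℝ := fun n => ((n:ℝ)/σ2) ^ q with hMdef
  have hMpos : ∀ n : ℕ, 0 < n → 0 < M n := by
    intro n hn
    have : (0:ℝ) < n := by exact_mod_cast hn
    exact Real.rpow_pos_of_pos (div_pos this hσ) q
  have hMβ : ∀ n : ℕ, (M n) ^ β = (n:ℝ)/σ2 := by
    intro n
    rw [hMdef]
    rw [← Real.rpow_mul (div_nonneg (Nat.cast_nonneg n) hσ.le), hqβ, Real.rpow_one]
  have hMtop : Tendsto M atTop atTop := by
    apply (tendsto_rpow_atTop hq0).comp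
    exact Tendsto.atTop_div_const hσ tendsto_natCast_atTop_atTop
  have hMsmall : ∀ᶠ n : ℕ in atTop, M n ≤ (n:ℝ)/2 := by
    have t1 : Tendsto (fun x : ℝ => x ^ (-(1 - q))) atTop (nhds 0) :=
      tendsto_rpow_neg_atTop (by linarith)
    have t2 : Tendsto (fun n : ℕ => σ2 ^ (-q) * ((n:ℝ) ^ (-(1-q)))) atTop (nhds 0) := by
      have := (t1.comp tendsto_natCast_atTop_atTop).const_mul (σ2 ^ (-q))
      simpa using this
    have t3 : Tendsto (fun n : ℕ => M n / n) atTop (nhds 0) := by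
      apply t2.congr'
      filter_upwards [eventually_ge_atTop 1] with n hn
      have hn0 : (0:ℝ) < n := by exact_mod_cast hn
      rw [hMdef]
      simp only
      rw [Real.div_rpow (Nat.cast_nonneg n) hσ.le]
      rw [Real.rpow_neg hn0.le, Real.rpow_neg hσ.le]
      rw [Real.rpow_sub hn0, Real.rpow_one]
      field_simp
    filter_upwards [t3.eventually_lt_const (by norm_num : (0:ℝ) < 1/2),
      eventually_ge_atTop 1] with n h1 hn
    have hn0 : (0:ℝ) < n := by exact_mod_cast hn
    rw [div_lt_iff₀ hn0] at h1
    linarith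
  -- sandwich
  have hsand : ∀ n : ℕ, 4 ≤ M n → M n ≤ (n:ℝ)/2 → 8 ≤ n →
      M n - 1 ≤ (mstar n : ℝ) ∧ (mstar n : ℝ) ≤ M n := by
    intro n h4 h2 h8
    have hn1 : 1 ≤ n := by omega
    have hn0 : (0:ℝ) < n := by exact_mod_cast (by omega : 0 < n)
    obtain ⟨hms1, hmsn⟩ := Finset.mem_Icc.1 (hmem n hn1)
    constructor
    · by_contra hc
      push_neg at hc
      have hlt : ((mstar n + 1 : ℕ) : ℝ) < M n := by push_cast; linarith
      have hle_n : mstar n + 1 ≤ n := by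
        have : ((mstar n + 1 : ℕ) : ℝ) ≤ (n:ℝ) := hlt.le.trans (by linarith)
        exact_mod_cast this
      have hmem2 : mstar n + 1 ∈ Finset.Icc 1 n := Finset.mem_Icc.2 ⟨by omega, hle_n⟩
      have hR := hmin n (mstar n + 1) hmem2
      rw [aux_msRisk_succ n (mstar n) σ2 θ hle_n] at hR
      have hx0 : (0:ℝ) < ((mstar n + 1 : ℕ):ℝ) := by positivity
      have hpow : ((mstar n + 1:ℕ):ℝ)^β < (n:ℝ)/σ2 := by
        rw [← hMβ n]
        exact Real.rpow_lt_rpow hx0.le hlt hβ0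
      have hinv : σ2/(n:ℝ) < ((mstar n + 1:ℕ):ℝ)^(-β) := by
        rw [Real.rpow_neg hx0.le, show σ2/(n:ℝ) = ((n:ℝ)/σ2)⁻¹ by rw [inv_div]]
        gcongr
      rw [hθ2 (mstar n + 1) (by omega)] at hR
      linarith
    · by_contra hc
      push_neg at hc
      have hms2 : 2 ≤ mstar n := by
        have h5 : (4:ℝ) < (mstar n : ℝ) := lt_of_le_of_lt h4 hc
        have h6 : (2:ℝ) ≤ (mstar n:ℝ) := by linarith
        exact_mod_cast h6
      have hmem2 : mstar n - 1 ∈ Finset.Icc 1 n := Finset.mem_Icc.2 ⟨by omega, by omega⟩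
      have hR := hmin n (mstar n - 1) hmem2
      have heq := aux_msRisk_succ n (mstar n - 1) σ2 θ (by omega)
      rw [show mstar n - 1 + 1 = mstar n by omega] at heq
      have hx0 : (0:ℝ) < (mstar n:ℝ) := by exact_mod_cast (by omega : 0 < mstar n)
      have hpow : (n:ℝ)/σ2 < ((mstar n:ℕ):ℝ)^β := by
        rw [← hMβ n]
        exact Real.rpow_lt_rpow (hMpos n (by omega)).le hc hβ0
      have hinv : ((mstar n:ℕ):ℝ)^(-β) < σ2/(n:ℝ) := by
        rw [Real.rpow_neg hx0.le, show σ2/(n:ℝ) = ((n:ℝ)/σ2)⁻¹ by rw [inv_div]]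
        gcongr
      rw [hθ2 (mstar n) (by omega)] at heq
      linarith
  have hE : ∀ᶠ n : ℕ in atTop, 4 ≤ M n ∧ M n ≤ (n:ℝ)/2 ∧ 8 ≤ n := by
    filter_upwards [hMtop.eventually_ge_atTop 4, hMsmall, eventually_ge_atTop 8] with n h1 h2 h3
    exact ⟨h1, h2, h3⟩
  -- part (i)
  have part1 : Filter.Tendsto (fun n => (mstar n : ℝ) / (((n : ℝ) / σ2) ^ q))
      Filter.atTop (nhds 1) := by
   have hlow : Tendsto (fun n : ℕ => 1 - 1 / M n) atTop (nhds 1) := by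
     have := hMtop.inv_tendsto_atTop
     have h2 := (tendsto_const_nhds (x := (1:ℝ)) (f := atTop (α := ℕ))).sub this
     simpa [one_div] using h2
   apply tendsto_of_tendsto_of_tendsto_of_le_of_le' hlow tendsto_const_nhds
   · filter_upwards [hE] with n ⟨h4, h2, h8⟩
     obtain ⟨hl, hu⟩ := hsand n h4 h2 h8
     have hM0 : 0 < M n := by linarith
     show 1 - 1/M n ≤ (mstar n:ℝ)/M n
     rw [le_div_iff₀ hM0, sub_mul, one_mul, div_mul_cancel₀ _ hM0.ne']
     linarith
   · filter_upwards [hE] with n ⟨h4, h2, h8⟩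
     obtain ⟨hl, hu⟩ := hsand n h4 h2 h8
     have hM0 : 0 < M n := by linarith
     show (mstar n:ℝ)/M n ≤ 1
     rw [div_le_one hM0]
     exact hu
  -- scaling identities
  have hσq : (0:ℝ) < σ2 ^ (1-q) := Real.rpow_pos_of_pos hσ _
  have hg0 : ∀ n : ℕ, (0:ℝ) ≤ (n:ℝ)^((-1:ℝ)+q) := fun n => Real.rpow_nonneg (Nat.cast_nonneg n) _
  have hscale : ∀ n : ℕ, 1 ≤ n → M n * σ2 / n = σ2^(1-q) * (n:ℝ)^((-1:ℝ)+q) := by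
    intro n hn
    have hn0 : (0:ℝ) < n := by exact_mod_cast hn
    have h1 : σ2 ^ q ≠ 0 := (Real.rpow_pos_of_pos hσ q).ne'
    show ((n:ℝ)/σ2)^q * σ2 / n = _
    rw [Real.div_rpow (Nat.cast_nonneg n) hσ.le, Real.rpow_sub hσ, Real.rpow_one,
        Real.rpow_add hn0, Real.rpow_neg_one]
    field_simp
  have hscale2 : ∀ n : ℕ, 1 ≤ n → (M n)^(1-β) = σ2^(1-q) * (n:ℝ)^((-1:ℝ)+q) := by
    intro n hn
    have hn0 : (0:ℝ) < n := by exact_mod_cast hn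
    have h1 : (M n)^(1-β) = ((n:ℝ)/σ2)^(q*(1-β)) := by
      rw [Real.rpow_mul (div_nonneg (Nat.cast_nonneg n) hσ.le)]
    rw [h1, show q*(1-β) = (-1:ℝ)+q by rw [mul_sub, mul_one, hqβ]; ring]
    rw [Real.div_rpow (Nat.cast_nonneg n) hσ.le, div_eq_mul_inv,
        ← Real.rpow_neg hσ.le, show -((-1:ℝ)+q) = 1 - q by ring]
    ring
  have htail : ∀ n : ℕ, 1 ≤ mstar n →
      (∑ l ∈ Finset.Icc (mstar n + 1) n, θ l ^ 2) ≤ ((mstar n:ℕ):ℝ)^(1-β)/(β-1) := by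
    intro n h1
    have he : (∑ l ∈ Finset.Icc (mstar n + 1) n, θ l ^2)
        = ∑ l ∈ Finset.Icc (mstar n + 1) n, ((l:ℝ))^(-β) := by
      refine Finset.sum_congr rfl fun l hl => hθ2 l ?_
      have := (Finset.mem_Icc.1 hl).1; omega
    rw [he]
    exact aux_tail β hβ1 (mstar n) n h1
  -- upper bound for msRisk at mstar
  have hub : ∀ n : ℕ, 4 ≤ M n → M n ≤ (n:ℝ)/2 → 8 ≤ n →
      msRisk n n σ2 θ (mstar n) ≤ (σ2^(1-q)*(1+2^(β-1)/(β-1))) * (n:ℝ)^((-1:ℝ)+q) := by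
    intro n h4 h2 h8
    have hn1 : 1 ≤ n := by omega
    have hn0 : (0:ℝ) < n := by exact_mod_cast (by omega : 0 < n)
    obtain ⟨hms1, hmsn⟩ := Finset.mem_Icc.1 (hmem n hn1)
    obtain ⟨hl, hu⟩ := hsand n h4 h2 h8
    have hM0 : (0:ℝ) < M n := by linarith
    have t1 := htail n hms1
    have t2 : ((mstar n:ℕ):ℝ)^(1-β) ≤ (M n/2)^(1-β) :=
      Real.rpow_le_rpow_of_nonpos (by linarith) (by linarith) (by linarith)
    have t3 : (M n/2)^(1-β) = (M n)^(1-β) * 2^(β-1) := by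
      rw [Real.div_rpow hM0.le (by norm_num), div_eq_mul_inv,
          ← Real.rpow_neg (by norm_num : (0:ℝ) ≤ 2), neg_sub]
    have e1 := hscale n hn1
    have e2 := hscale2 n hn1
    have hβ1' : (0:ℝ) < β - 1 := by linarith
    have m1 : (mstar n:ℝ)*σ2/n ≤ M n*σ2/n := by gcongr
    have m2 : (∑ l ∈ Finset.Icc (mstar n+1) n, θ l^2) ≤ (M n)^(1-β)*2^(β-1)/(β-1) := by
      refine t1.trans ?_
      exact div_le_div_of_nonneg_right (t2.trans_eq t3) hβ1'.le
    calc msRisk n n σ2 θ (mstar n)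
        = (mstar n:ℝ)*σ2/n + (∑ l ∈ Finset.Icc (mstar n+1) n, θ l^2) := rfl
      _ ≤ M n*σ2/n + (M n)^(1-β)*2^(β-1)/(β-1) := add_le_add m1 m2
      _ = σ2^(1-q)*(n:ℝ)^((-1:ℝ)+q) + (σ2^(1-q)*(n:ℝ)^((-1:ℝ)+q))*2^(β-1)/(β-1) := by
          rw [e1, e2]
      _ = (σ2^(1-q)*(1+2^(β-1)/(β-1))) * (n:ℝ)^((-1:ℝ)+q) := by ring
  -- lower bound for msRisk at mstar
  have hlbms : ∀ n : ℕ, 4 ≤ M n → M n ≤ (n:ℝ)/2 → 8 ≤ n →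
      σ2^(1-q)/2 * (n:ℝ)^((-1:ℝ)+q) ≤ msRisk n n σ2 θ (mstar n) := by
    intro n h4 h2 h8
    have hn1 : 1 ≤ n := by omega
    have hn0 : (0:ℝ) < n := by exact_mod_cast (by omega : 0 < n)
    obtain ⟨hl, hu⟩ := hsand n h4 h2 h8
    have tail0 : (0:ℝ) ≤ ∑ l ∈ Finset.Icc (mstar n+1) n, θ l^2 :=
      Finset.sum_nonneg fun l _ => sq_nonneg _
    have m1 : M n/2 * (σ2/n) ≤ (mstar n:ℝ)*σ2/n := by
      have hms : M n/2 ≤ (mstar n:ℝ) := by linarith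
      calc M n/2*(σ2/n) ≤ (mstar n:ℝ)*(σ2/n) :=
            mul_le_mul_of_nonneg_right hms (by positivity)
        _ = (mstar n:ℝ)*σ2/n := by ring
    have e1 := hscale n hn1
    have e2 : σ2^(1-q)/2*((n:ℝ)^((-1:ℝ)+q)) = M n/2*(σ2/n) := by
      rw [show M n/2*(σ2/(n:ℝ)) = (M n*σ2/(n:ℝ))/2 by ring, e1]; ring
    calc σ2^(1-q)/2 * (n:ℝ)^((-1:ℝ)+q) = M n/2*(σ2/n) := e2
      _ ≤ (mstar n:ℝ)*σ2/n := m1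
      _ ≤ (mstar n:ℝ)*σ2/n + ∑ l ∈ Finset.Icc (mstar n+1) n, θ l^2 := by linarith
      _ = msRisk n n σ2 θ (mstar n) := rfl
  -- the point-mass weight realizes msRisk
  have hw0 : ∀ n : ℕ, 1 ≤ n →
      InSimplex n (fun m => if m = mstar n then (1:ℝ) else 0) ∧
      nestedRisk n n n σ2 θ (fun m => if m = mstar n then (1:ℝ) else 0)
        = msRisk n n σ2 θ (mstar n) := by
    intro n hn
    obtain ⟨hms1, hmsn⟩ := Finset.mem_Icc.1 (hmem n hn)
    constructor
    · constructor
      · intro m _; dsimp only; split <;> norm_num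
      · rw [Finset.sum_ite_eq' (Finset.Icc 1 n) (mstar n) (fun _ => (1:ℝ))]
        simp [Finset.mem_Icc, hms1, hmsn]
    · have hcum : ∀ j, cumw n (fun m => if m = mstar n then (1:ℝ) else 0) j
          = if j ≤ mstar n then 1 else 0 := by
        intro j
        unfold cumw
        rw [Finset.sum_ite_eq' (Finset.Icc j n) (mstar n) (fun _ => (1:ℝ))]
        by_cases h : j ≤ mstar n
        · simp [Finset.mem_Icc, h, hmsn]
        · simp [Finset.mem_Icc, h]
      unfold nestedRisk msRisk
      rw [Finset.Icc_eq_empty (by omega : ¬ n+1 ≤ n), Finset.sum_empty, add_zero]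
      have hIcc1 : Finset.Icc 1 n = Finset.Ioc 0 n := by
        ext x; simp only [Finset.mem_Icc, Finset.mem_Ioc]; omega
      have hIcc2 : Finset.Icc (mstar n+1) n = Finset.Ioc (mstar n) n := by
        ext x; simp only [Finset.mem_Icc, Finset.mem_Ioc]; omega
      rw [hIcc1, hIcc2, ← Finset.sum_Ioc_consecutive _ (Nat.zero_le (mstar n)) hmsn]
      congr 1
      · have hc : ∀ j ∈ Finset.Ioc 0 (mstar n),
            (1 - cumw n (fun m => if m = mstar n then (1:ℝ) else 0) j)^2 * θ j^2
              + σ2 * (cumw n (fun m => if m = mstar n then (1:ℝ) else 0) j)^2/n = σ2/n := by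
          intro j hj
          rw [hcum j, if_pos (Finset.mem_Ioc.1 hj).2]
          ring
        rw [Finset.sum_congr rfl hc, Finset.sum_const, Nat.card_Ioc, nsmul_eq_mul,
          Nat.sub_zero]
        push_cast
        ring
      · refine Finset.sum_congr rfl fun j hj => ?_
        have hjm : mstar n < j := (Finset.mem_Ioc.1 hj).1
        rw [hcum j, if_neg (by omega)]
        ring
  -- Rstar upper via point mass
  have hRub : ∀ n : ℕ, 1 ≤ n → Rstar n ≤ msRisk n n σ2 θ (mstar n) := by
    intro n hn
    rw [hRstar n]
    have hbdd : BddBelow {r : ℝ | ∃ w, InSimplex n w ∧ r = nestedRisk n n n σ2 θ w} := by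
      refine ⟨0, ?_⟩
      rintro r ⟨w, hw, rfl⟩
      refine add_nonneg (Finset.sum_nonneg fun j _ => add_nonneg
        (mul_nonneg (sq_nonneg _) (sq_nonneg _))
        (div_nonneg (mul_nonneg hσ.le (sq_nonneg _)) (Nat.cast_nonneg n)))
        (Finset.sum_nonneg fun l _ => sq_nonneg _)
    calc sInf {r : ℝ | ∃ w, InSimplex n w ∧ r = nestedRisk n n n σ2 θ w}
        ≤ nestedRisk n n n σ2 θ (fun m => if m = mstar n then (1:ℝ) else 0) :=
          csInf_le hbdd ⟨_, (hw0 n hn).1, rfl⟩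
      _ = msRisk n n σ2 θ (mstar n) := (hw0 n hn).2
  -- Rstar lower
  have hRlb : ∀ n : ℕ, 4 ≤ M n → M n ≤ (n:ℝ)/2 → 8 ≤ n →
      σ2^(1-q)/4 * (n:ℝ)^((-1:ℝ)+q) ≤ Rstar n := by
    intro n h4 h2 h8
    have hn1 : 1 ≤ n := by omega
    have hn0 : (0:ℝ) < n := by exact_mod_cast (by omega : 0 < n)
    have hM0 : (0:ℝ) < M n := by linarith
    rw [hRstar n]
    refine le_csInf ⟨nestedRisk n n n σ2 θ (fun m => if m = mstar n then (1:ℝ) else 0),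
      ⟨_, (hw0 n hn1).1, rfl⟩⟩ ?_
    rintro r ⟨w, hw, rfl⟩
    have hKn : ⌊M n⌋₊ ≤ n := by
      have h5 : M n ≤ (n:ℝ) := by linarith
      calc ⌊M n⌋₊ ≤ ⌊(n:ℝ)⌋₊ := Nat.floor_le_floor h5
        _ = n := Nat.floor_natCast n
    have hKM : ((⌊M n⌋₊:ℕ):ℝ) ≤ M n := Nat.floor_le hM0.le
    have hKlow : M n - 1 ≤ ((⌊M n⌋₊:ℕ):ℝ) := (Nat.sub_one_lt_floor (M n)).le
    have step1 : ∀ j ∈ Finset.Icc 1 ⌊M n⌋₊, σ2/(2*(n:ℝ))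
        ≤ (1 - cumw n w j)^2 * θ j^2 + σ2 * (cumw n w j)^2 / n := by
      intro j hj
      obtain ⟨hj1, hjK⟩ := Finset.mem_Icc.1 hj
      have hj0 : (0:ℝ) < j := by exact_mod_cast hj1
      have hjM : (j:ℝ) ≤ M n := le_trans (by exact_mod_cast hjK) hKM
      have hpow : ((j:ℕ):ℝ)^β ≤ (n:ℝ)/σ2 := by
        rw [← hMβ n]; exact Real.rpow_le_rpow hj0.le hjM hβ0.le
      have hinv : σ2/(n:ℝ) ≤ ((j:ℕ):ℝ)^(-β) := by
        rw [Real.rpow_neg hj0.le, show σ2/(n:ℝ) = ((n:ℝ)/σ2)⁻¹ by rw [inv_div]]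
        exact inv_anti₀ (Real.rpow_pos_of_pos hj0 β) hpow
      have hθj : σ2/(n:ℝ) ≤ θ j^2 := by rw [hθ2 j hj1]; exact hinv
      have h1 : (0:ℝ) < σ2/(n:ℝ) := div_pos hσ hn0
      have key : σ2 * (cumw n w j)^2/(n:ℝ) = σ2/(n:ℝ) * (cumw n w j)^2 := by ring
      have key2 : σ2/(2*(n:ℝ)) = (σ2/(n:ℝ))/2 := by ring
      rw [key, key2]
      nlinarith [mul_le_mul_of_nonneg_left hθj (sq_nonneg (1 - cumw n w j)),
        mul_nonneg h1.le (sq_nonneg (1 - 2*(cumw n w j)))]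
    have hterm0 : ∀ j ∈ Finset.Icc 1 n,
        (0:ℝ) ≤ (1 - cumw n w j)^2 * θ j^2 + σ2 * (cumw n w j)^2 / n := fun j _ =>
      add_nonneg (mul_nonneg (sq_nonneg _) (sq_nonneg _))
        (div_nonneg (mul_nonneg hσ.le (sq_nonneg _)) (Nat.cast_nonneg n))
    have step2 : ((⌊M n⌋₊:ℕ):ℝ) * (σ2/(2*(n:ℝ)))
        ≤ ∑ j ∈ Finset.Icc 1 n, ((1 - cumw n w j)^2 * θ j^2 + σ2 * (cumw n w j)^2 / n) := by
      calc ((⌊M n⌋₊:ℕ):ℝ) * (σ2/(2*(n:ℝ)))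
          = ∑ _j ∈ Finset.Icc 1 ⌊M n⌋₊, σ2/(2*(n:ℝ)) := by
            rw [Finset.sum_const, Nat.card_Icc, nsmul_eq_mul]
            push_cast [Nat.add_sub_cancel]
            ring
        _ ≤ ∑ j ∈ Finset.Icc 1 ⌊M n⌋₊, ((1 - cumw n w j)^2 * θ j^2 + σ2 * (cumw n w j)^2 / n) :=
            Finset.sum_le_sum step1
        _ ≤ ∑ j ∈ Finset.Icc 1 n, ((1 - cumw n w j)^2 * θ j^2 + σ2 * (cumw n w j)^2 / n) :=
            Finset.sum_le_sum_of_subset_of_nonneg (Finset.Icc_subset_Icc_right hKn)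
              (fun j hj _ => hterm0 j hj)
    have final : σ2^(1-q)/4 * (n:ℝ)^((-1:ℝ)+q) ≤ ((⌊M n⌋₊:ℕ):ℝ)*(σ2/(2*(n:ℝ))) := by
      have e1 := hscale n hn1
      have hKge : M n/2 ≤ ((⌊M n⌋₊:ℕ):ℝ) := by linarith
      calc σ2^(1-q)/4 * (n:ℝ)^((-1:ℝ)+q) = (M n*σ2/(n:ℝ))/4 := by rw [e1]; ring
        _ = M n/2 * (σ2/(2*(n:ℝ))) := by ring
        _ ≤ ((⌊M n⌋₊:ℕ):ℝ)*(σ2/(2*(n:ℝ))) :=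
            mul_le_mul_of_nonneg_right hKge (by positivity)
    refine final.trans (step2.trans ?_)
    show _ ≤ (∑ j ∈ Finset.Icc 1 n, ((1 - cumw n w j)^2 * θ j^2 + σ2 * (cumw n w j)^2 / n))
      + ∑ l ∈ Finset.Icc (n+1) n, θ l ^ 2
    have hnn : (0:ℝ) ≤ ∑ l ∈ Finset.Icc (n+1) n, θ l^2 :=
      Finset.sum_nonneg fun l _ => sq_nonneg _
    linarith
  -- assembly
  have hCc : σ2^(1-q)/4 ≤ σ2^(1-q)*(1+2^(β-1)/(β-1)) ∧ σ2^(1-q)/2 ≤ σ2^(1-q)*(1+2^(β-1)/(β-1)) := by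
    have h1 : (0:ℝ) < 2^(β-1)/(β-1) :=
      div_pos (Real.rpow_pos_of_pos two_pos _) (by linarith)
    constructor <;> nlinarith
  refine ⟨part1, ⟨σ2^(1-q)/4, σ2^(1-q)*(1+2^(β-1)/(β-1)),
      div_pos hσq (by norm_num), hCc.1, ?_⟩,
    ⟨σ2^(1-q)/2, σ2^(1-q)*(1+2^(β-1)/(β-1)), div_pos hσq (by norm_num), hCc.2, ?_⟩⟩
  · filter_upwards [hE] with n ⟨h4, h2, h8⟩
    exact ⟨hRlb n h4 h2 h8, (hRub n (by omega)).trans (hub n h4 h2 h8)⟩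
  · filter_upwards [hE] with n ⟨h4, h2, h8⟩
    exact ⟨hlbms n h4 h2 h8, hub n h4 h2 h8⟩
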